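/- Let Y be a class of timed languages that (1) contains all timeless timed languages (languages recognised by 0-clock automata), (2) is closed under union and under composition L ▷ {$} ▷ M, and (3) contains some language not recognised by any deterministic timed automaton with k clocks. Then for every L ∈ Y over alphabet Σ, setting N := (L ▷ {$} ▷ TW(Γ)) ∪ (TW(Σ) ▷ {$} ▷ M), where M ∈ Y is a fixed non-k-DTA language over Γ and $ is a fresh symbol: L = TW(Σ) if and only if N is recognised by a deterministic timed automaton with k clocks. -/

import Mathlib

/-- A timed automorphism: a monotone bijection `π : ℝ → ℝ` with `π (x+1) = π x + 1`. -/
def IsTimedAutomorphism (π : ℝ → ℝ) : Prop :=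
  Function.Bijective π ∧ StrictMono π ∧ ∀ x : ℝ, π (x + 1) = π x + 1

/-- An `S`-timed automorphism: a timed automorphism fixing every point of `S`. -/
def IsSTimedAutomorphism (S : Set ℝ) (π : ℝ → ℝ) : Prop :=
  IsTimedAutomorphism π ∧ ∀ t ∈ S, π t = t

/-- A timed word: a finite sequence of letters with nonnegative, nondecreasing timestamps. -/
def IsTimedWord {A : Type*} (w : List (A × ℝ)) : Prop :=
  (∀ p ∈ w, 0 ≤ p.2) ∧ (w.map Prod.snd).Chain' (· ≤ ·)

/-- Pointwise action of a real function on the timestamps of a timed word. -/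
def mapTW {A : Type*} (π : ℝ → ℝ) (w : List (A × ℝ)) : List (A × ℝ) :=
  w.map fun p => (p.1, π p.2)

/-- Comparison operators appearing in clock constraints. -/
inductive CmpOp where
  | lt | le | eq | ge | gt

def CmpOp.holds : CmpOp → ℝ → ℝ → Prop
  | .lt, a, b => a < b
  | .le, a, b => a ≤ b
  | .eq, a, b => a = b
  | .ge, a, b => a ≥ b
  | .gt, a, b => a > b

/-- Clock constraints: Boolean combinations of comparisons of clock values and of
differences of clock values with integer constants. -/
inductive ClockConstraint (X : Type*) where
  | tt : ClockConstraint X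
  | ff : ClockConstraint X
  | diff : X → X → CmpOp → ℤ → ClockConstraint X
  | single : X → CmpOp → ℤ → ClockConstraint X
  | not : ClockConstraint X → ClockConstraint X
  | and : ClockConstraint X → ClockConstraint X → ClockConstraint X
  | or : ClockConstraint X → ClockConstraint X → ClockConstraint X

/-- Satisfaction of a clock constraint by a clock valuation `ν : X → ℝ`. -/
def ClockConstraint.sat {X : Type*} (ν : X → ℝ) : ClockConstraint X → Prop
  | .tt => True
  | .ff => False
  | .diff x y c z => CmpOp.holds c (ν x - ν y) (z : ℝ)
  | .single x c z => CmpOp.holds c (ν x) (z : ℝ)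
  | .not φ => ¬ ClockConstraint.sat ν φ
  | .and φ ψ => ClockConstraint.sat ν φ ∧ ClockConstraint.sat ν ψ
  | .or φ ψ => ClockConstraint.sat ν φ ∨ ClockConstraint.sat ν ψ

/-- All integer constants of the constraint have absolute value at most `m`. -/
def ClockConstraint.constBounded {X : Type*} (m : ℕ) : ClockConstraint X → Prop
  | .tt => True
  | .ff => True
  | .diff _ _ _ z => z.natAbs ≤ m
  | .single _ _ z => z.natAbs ≤ m
  | .not φ => ClockConstraint.constBounded m φ
  | .and φ ψ => ClockConstraint.constBounded m φ ∧ ClockConstraint.constBounded m ψ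
  | .or φ ψ => ClockConstraint.constBounded m φ ∧ ClockConstraint.constBounded m ψ

/-- A (nondeterministic) timed automaton over alphabet `A`, locations `Q`, clocks `X`.
A rule `(p, a, φ, Y, q)` reads letter `a` in location `p`, tests guard `φ`, resets the
clocks in `Y` and moves to location `q`. -/
structure TimedAutomaton (A Q X : Type*) where
  init : Set Q
  final : Set Q
  rules : Set (Q × A × ClockConstraint X × Set X × Q)

/-- A configuration in the reset-point semantics: a location, a reset-point
assignment for the clocks, and the current timestamp. -/
abbrev TAConfig (Q X : Type*) := Q × (X → ℝ) × ℝ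

/-- One transition of the reset-point semantics: at time `t ≥ now`, the guard of some
rule is satisfied by the valuation `x ↦ t - μ x`; clocks in the reset set get reset
point `t`, the others keep their reset points. -/
def TimedAutomaton.Step {A Q X : Type*} (Aut : TimedAutomaton A Q X)
    (c : TAConfig Q X) (e : A × ℝ) (c' : TAConfig Q X) : Prop :=
  c'.2.2 = e.2 ∧ c.2.2 ≤ e.2 ∧
  ∃ φ Y, (c.1, e.1, φ, Y, c'.1) ∈ Aut.rules ∧
    ClockConstraint.sat (fun x => e.2 - c.2.1 x) φ ∧
    (∀ x ∈ Y, c'.2.1 x = e.2) ∧ (∀ x ∉ Y, c'.2.1 x = c.2.1 x)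

/-- Runs of a timed automaton over a timed word. -/
inductive TimedAutomaton.Run {A Q X : Type*} (Aut : TimedAutomaton A Q X) :
    TAConfig Q X → List (A × ℝ) → TAConfig Q X → Prop
  | nil (c : TAConfig Q X) : Aut.Run c [] c
  | cons {c c' c'' : TAConfig Q X} {e : A × ℝ} {w : List (A × ℝ)} :
      Aut.Step c e c' → Aut.Run c' w c'' → Aut.Run c (e :: w) c''

/-- Language of a configuration: timed words admitting an accepting run from it. -/
def TimedAutomaton.LangFrom {A Q X : Type*} (Aut : TimedAutomaton A Q X)
    (c : TAConfig Q X) : Set (List (A × ℝ)) :=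
  {w | ∃ c', Aut.Run c w c' ∧ c'.1 ∈ Aut.final}

/-- Language of a timed automaton: union over initial configurations. -/
def TimedAutomaton.Lang {A Q X : Type*} (Aut : TimedAutomaton A Q X) :
    Set (List (A × ℝ)) :=
  {w | ∃ p ∈ Aut.init, w ∈ Aut.LangFrom (p, fun _ => 0, 0)}

/-- A configuration is reachable if some run from an initial configuration ends in it. -/
def TimedAutomaton.Reachable {A Q X : Type*} (Aut : TimedAutomaton A Q X)
    (c : TAConfig Q X) : Prop :=
  ∃ p ∈ Aut.init, ∃ w, Aut.Run (p, fun _ => 0, 0) w c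

/-- Determinism: unique initial location, and two rules from the same location on the
same letter with jointly satisfiable guards agree on resets and target. -/
def TimedAutomaton.IsDeterministic {A Q X : Type*} (Aut : TimedAutomaton A Q X) : Prop :=
  (∃! p, p ∈ Aut.init) ∧
  ∀ p a φ Y q φ' Y' q', (p, a, φ, Y, q) ∈ Aut.rules → (p, a, φ', Y', q') ∈ Aut.rules →
    (∃ ν : X → ℝ, ClockConstraint.sat ν φ ∧ ClockConstraint.sat ν φ') →
    Y = Y' ∧ q = q'

/-- The set of all timed words over alphabet `A`. -/
def TW (A : Type*) : Set (List (A × ℝ)) := {w | IsTimedWord w}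

/-- Composition `L ▷ {$} ▷ M`: words of `L`, followed by the fresh symbol `$` at some
time `t`, followed by a word of `M` shifted by `t`; the fresh symbol is modelled by
the middle `Unit` summand. -/
def compLang {A B : Type*} (L : Set (List (A × ℝ))) (M : Set (List (B × ℝ))) :
    Set (List ((A ⊕ Unit ⊕ B) × ℝ)) :=
  {w | ∃ v ∈ L, ∃ t : ℝ, ∃ m ∈ M,
    w = (v.map fun p => (Sum.inl p.1, p.2)) ++
      (Sum.inr (Sum.inl ()), t) ::
        (m.map fun p => (Sum.inr (Sum.inr p.1), p.2 + t)) ∧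
    IsTimedWord w}

/-- Recognisability by a deterministic timed automaton with `k` clocks. -/
def RecognisableByDTA (k : ℕ) {A : Type*} (L : Set (List (A × ℝ))) : Prop :=
  ∃ (Loc : Type) (_ : Finite Loc) (B : TimedAutomaton A Loc (Fin k)),
    B.IsDeterministic ∧ TimedAutomaton.Lang B = L

/-- A timed language is timeless if it is recognised by a timed automaton with no
clocks. -/
def Timeless {A : Type*} (L : Set (List (A × ℝ))) : Prop :=
  ∃ (Loc : Type) (_ : Finite Loc) (B : TimedAutomaton A Loc Empty),
    TimedAutomaton.Lang B = L

/-!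
If `L = TW Σ`, then `N = TW Σ ▷ {$} ▷ TW Γ`, a language recognised by a clockless DFA for the
letter pattern `Σ* $ Γ*`.

Conversely, let a `k`-DTA `B` recognise `N` and let `u ∈ TW Σ \ L`. Since guards only use
integer constants, `B`'s language is invariant under timed automorphisms `π` fixing `ℤ`; as
`M ≠ TW Γ` (the latter being a `k`-DTA language), the residual of `N` by `π u $` forces
`π u ∉ L` and makes `M` invariant under all such `π`. Choose `π` squeezing the fractional parts
of the timestamps of `u` below `1/4` and let `B` read `π u` followed by `$` at an integer time
`n`: it reaches a configuration whose residual language is `M` and whose reset points lie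
within `1/4` below integers. On words whose timestamps are integers or `1/4`-far from `ℤ`,
rounding the guard constants turns `B` from that configuration into a `k`-DTA started with all
clocks at `0`; every timed word is moved into that form by a `ℤ`-fixing automorphism, so this
`k`-DTA recognises `M`, a contradiction.
-/

open TimedAutomaton

/-! ### Timed automorphisms -/

namespace IsTimedAutomorphism

variable {π : ℝ → ℝ}

lemma map_add_intCast (h : IsTimedAutomorphism π) (x : ℝ) (n : ℤ) :
    π (x + n) = π x + n := by
  have hnat : ∀ (y : ℝ) (m : ℕ), π (y + m) = π y + m := by
    intro y m
    induction m with
    | zero => simp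
    | succ m ih => push_cast; rw [← add_assoc, h.2.2, ih, add_assoc]
  obtain ⟨m, rfl | rfl⟩ := Int.eq_nat_or_neg n
  · exact_mod_cast hnat x m
  · have := hnat (x - m) m
    rw [sub_add_cancel] at this
    push_cast
    rw [← sub_eq_add_neg, this]
    ring

lemma holds_map_sub_map (h : IsTimedAutomorphism π) (c : CmpOp) (a b : ℝ) (z : ℤ) :
    c.holds (π a - π b) z ↔ c.holds (a - b) z := by
  cases c <;>
    simp only [CmpOp.holds, ge_iff_le, gt_iff_lt, sub_lt_iff_lt_add', sub_le_iff_le_add',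
      lt_sub_iff_add_lt', le_sub_iff_add_le', sub_eq_iff_eq_add', ← h.map_add_intCast,
      h.2.1.lt_iff_lt, h.2.1.le_iff_le, h.1.1.eq_iff]

lemma sat_map_sub_map (h : IsTimedAutomorphism π) {X : Type*} (t : ℝ) (ρ : X → ℝ)
    (φ : ClockConstraint X) :
    φ.sat (fun x => π t - π (ρ x)) ↔ φ.sat (fun x => t - ρ x) := by
  induction φ with
  | tt | ff => rfl
  | diff x y c z =>
    simp only [ClockConstraint.sat, sub_sub_sub_cancel_left]
    exact h.holds_map_sub_map c _ _ z
  | single x c z => exact h.holds_map_sub_map c t (ρ x) z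
  | not φ ih => exact ih.not
  | and φ ψ ih₁ ih₂ => exact and_congr ih₁ ih₂
  | or φ ψ ih₁ ih₂ => exact or_congr ih₁ ih₂

end IsTimedAutomorphism

namespace IsSTimedAutomorphism

variable {S : Set ℝ} {π : ℝ → ℝ}

lemma exists_inverse (h : IsSTimedAutomorphism S π) :
    ∃ σ, IsSTimedAutomorphism S σ ∧ Function.LeftInverse σ π ∧ Function.RightInverse σ π := by
  obtain ⟨⟨hbij, hmono, hadd⟩, hfix⟩ := h
  let o := hmono.orderIsoOfSurjective π hbij.2
  have hleft : Function.LeftInverse o.symm π := o.symm_apply_apply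
  have hright : Function.RightInverse o.symm π := o.apply_symm_apply
  refine ⟨o.symm, ⟨⟨o.symm.bijective, o.symm.strictMono, fun x => hbij.1 ?_⟩, fun t ht => ?_⟩,
    hleft, hright⟩
  · rw [hright, hadd, hright]
  · conv_lhs => rw [← hfix t ht]
    exact hleft t

lemma comp {σ : ℝ → ℝ} (hσ : IsSTimedAutomorphism S σ) (hπ : IsSTimedAutomorphism S π) :
    IsSTimedAutomorphism S (σ ∘ π) :=
  ⟨⟨hσ.1.1.comp hπ.1.1, hσ.1.2.1.comp hπ.1.2.1, fun x => by simp [hπ.1.2.2, hσ.1.2.2]⟩,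
    fun t ht => by simp [hπ.2 t ht, hσ.2 t ht]⟩

lemma map_intCast (h : IsSTimedAutomorphism {0} π) (n : ℤ) : π n = n := by
  simpa [h.2 0 rfl] using h.1.map_add_intCast 0 n

lemma map_nonneg (h : IsSTimedAutomorphism {0} π) {x : ℝ} (hx : 0 ≤ x) : 0 ≤ π x :=
  h.2 0 rfl ▸ h.1.2.1.monotone hx

lemma mapTW_mem_TW (h : IsSTimedAutomorphism {0} π) {A : Type*} {w : List (A × ℝ)}
    (hw : w ∈ TW A) : mapTW π w ∈ TW A := by
  refine ⟨?_, ?_⟩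
  · simp only [mapTW, List.mem_map]
    rintro _ ⟨p, hp, rfl⟩
    exact h.map_nonneg (hw.1 p hp)
  · have hsnd : (mapTW π w).map Prod.snd = (w.map Prod.snd).map π := by simp [mapTW]
    exact hsnd ▸ List.isChain_map_of_isChain π (fun _ _ => (h.1.2.1.monotone ·)) hw.2

lemma mapTW_le (h : IsSTimedAutomorphism {0} π) {A : Type*} {u : List (A × ℝ)} {n : ℤ}
    (hu : ∀ p ∈ u, p.2 ≤ n) : ∀ p ∈ mapTW π u, p.2 ≤ n := by
  simp only [mapTW, List.mem_map]
  rintro _ ⟨p, hp, rfl⟩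
  exact h.map_intCast n ▸ h.1.2.1.monotone (hu p hp)

end IsSTimedAutomorphism

/-! ### Squeezing fractional parts -/

def IntOrFar (ε v : ℝ) : Prop := ∀ n : ℤ, v = n ∨ ε ≤ |v - n|

lemma IntOrFar.neg {ε v : ℝ} (h : IntOrFar ε v) : IntOrFar ε (-v) := by
  intro n
  rcases h (-n) with h | h
  · exact .inl (by rw [h]; push_cast; ring)
  · have hneg : -v - (n : ℝ) = -(v - ((-n : ℤ) : ℝ)) := by push_cast; ring
    exact .inr (by rwa [hneg, abs_neg])

lemma intOrFar_of_fract {ε v : ℝ} (hε : ε ≤ 1)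
    (h : Int.fract v = 0 ∨ ε ≤ Int.fract v ∧ Int.fract v ≤ 1 - ε) : IntOrFar ε v := by
  intro n
  have hv := Int.floor_add_fract v
  rcases lt_trichotomy ⌊v⌋ n with hn | hn | hn
  · have : (⌊v⌋ : ℝ) + 1 ≤ n := by exact_mod_cast hn
    have := Int.fract_lt_one v
    refine .inr (le_abs.2 (.inr ?_))
    rcases h with h | h <;> linarith
  · rcases h with h | h
    · exact .inl (by rw [← hv, h, hn, add_zero])
    · exact .inr (le_abs.2 (.inl (by rw [← hv, hn]; linarith)))
  · have : (n : ℝ) + 1 ≤ ⌊v⌋ := by exact_mod_cast hn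
    have := Int.fract_nonneg v
    refine .inr (le_abs.2 (.inl ?_))
    rcases h with h | h <;> linarith

lemma IntOrFar.intCast {ε : ℝ} (hε : ε ≤ 1) (m : ℤ) : IntOrFar ε m :=
  intOrFar_of_fract hε (.inl (Int.fract_intCast m))

lemma IntOrFar.zero {ε : ℝ} (hε : ε ≤ 1) : IntOrFar ε 0 := by
  simpa using IntOrFar.intCast hε 0

lemma IntOrFar.le_or_eq_or_le {ε V : ℝ} (h : IntOrFar ε V) (n : ℤ) :
    V ≤ n - ε ∨ V = n ∨ n + ε ≤ V := by
  rcases h n with h | h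
  · exact .inr (.inl h)
  · rcases le_abs'.1 h with h | h
    · exact .inl (by linarith)
    · exact .inr (.inr (by linarith))

lemma isSTimedAutomorphism_floor_add {g : ℝ → ℝ} (hg : StrictMono g) (hsurj : g.Surjective)
    (h0 : g 0 = 0) (h1 : g 1 = 1) :
    IsSTimedAutomorphism {0} fun x => ⌊x⌋ + g (Int.fract x) := by
  have hIco : ∀ {t}, 0 ≤ t → t < 1 → 0 ≤ g t ∧ g t < 1 := fun h₀ h₁ =>
    ⟨h0 ▸ hg.monotone h₀, h1 ▸ hg h₁⟩
  have hmono : StrictMono fun x => ⌊x⌋ + g (Int.fract x) := by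
    intro x y hxy
    rcases (Int.floor_le_floor hxy.le).lt_or_eq with hlt | heq
    · have hx := (hIco (Int.fract_nonneg x) (Int.fract_lt_one x)).2
      have hy := (hIco (Int.fract_nonneg y) (Int.fract_lt_one y)).1
      have : (⌊x⌋ : ℝ) + 1 ≤ ⌊y⌋ := by exact_mod_cast hlt
      simp only
      linarith
    · have : Int.fract x < Int.fract y := by
        rw [Int.fract, Int.fract, heq]
        linarith
      simp only [heq]
      linarith [hg this]
  refine ⟨⟨⟨hmono.injective, fun y => ?_⟩, hmono, fun x => ?_⟩, fun t ht => ?_⟩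
  · obtain ⟨t, ht⟩ := hsurj (Int.fract y)
    have ht₀ : 0 ≤ t := hg.le_iff_le.1 (by rw [h0, ht]; exact Int.fract_nonneg y)
    have ht₁ : t < 1 := hg.lt_iff_lt.1 (by rw [h1, ht]; exact Int.fract_lt_one y)
    refine ⟨⌊y⌋ + t, ?_⟩
    beta_reduce
    rw [Int.floor_intCast_add, Int.floor_eq_zero_iff.2 ⟨ht₀, ht₁⟩, Int.fract_intCast_add,
      Int.fract_eq_self.2 ⟨ht₀, ht₁⟩, ht, add_zero, Int.floor_add_fract]
  · simp only [Int.floor_add_one, Int.fract_add_one]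
    push_cast
    ring
  · obtain rfl := ht
    simp [h0]

/-- The piecewise linear bijection of `[0, 1]` sending `q` to `q'`. -/
noncomputable def bendUnit (q q' t : ℝ) : ℝ :=
  if t ≤ q then t * (q' / q) else 1 - (1 - t) * ((1 - q') / (1 - q))

section bendUnit

variable {q q' : ℝ}

lemma bendUnit_of_le {t : ℝ} (ht : t ≤ q) : bendUnit q q' t = t * (q' / q) := if_pos ht

lemma bendUnit_of_lt {t : ℝ} (ht : q < t) :
    bendUnit q q' t = 1 - (1 - t) * ((1 - q') / (1 - q)) := if_neg ht.not_ge

lemma bendUnit_le_iff (hq : q ∈ Set.Ioo 0 1) (hq' : q' ∈ Set.Ioo 0 1) {t : ℝ} :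
    bendUnit q q' t ≤ q' ↔ t ≤ q := by
  obtain ⟨hq₀, hq₁⟩ := hq
  obtain ⟨hq'₀, hq'₁⟩ := hq'
  rcases le_or_gt t q with ht | ht
  · refine iff_of_true ?_ ht
    calc bendUnit q q' t = t * (q' / q) := bendUnit_of_le ht
      _ ≤ q * (q' / q) := by gcongr
      _ = q' := by field_simp
  · rw [bendUnit_of_lt ht]
    refine iff_of_false (fun h => ?_) ht.not_ge
    have : (1 - q) * ((1 - q') / (1 - q)) = 1 - q' := by field_simp
    nlinarith [div_pos (sub_pos.2 hq'₁) (sub_pos.2 hq₁)]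

lemma bendUnit_strictMono (hq : q ∈ Set.Ioo 0 1) (hq' : q' ∈ Set.Ioo 0 1) :
    StrictMono (bendUnit q q') := by
  intro s t hst
  rcases le_or_gt t q with ht | ht
  · rw [bendUnit_of_le ht, bendUnit_of_le (hst.le.trans ht)]
    exact mul_lt_mul_of_pos_right hst (div_pos hq'.1 hq.1)
  rcases le_or_gt s q with hs | hs
  · exact ((bendUnit_le_iff hq hq').2 hs).trans_lt
      (not_le.1 ((bendUnit_le_iff hq hq').not.2 ht.not_ge))
  · rw [bendUnit_of_lt ht, bendUnit_of_lt hs]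
    have := div_pos (sub_pos.2 hq'.2) (sub_pos.2 hq.2)
    nlinarith

lemma bendUnit_bendUnit (hq : q ∈ Set.Ioo 0 1) (hq' : q' ∈ Set.Ioo 0 1) (t : ℝ) :
    bendUnit q' q (bendUnit q q' t) = t := by
  have h₁ : (1 : ℝ) - q ≠ 0 := (sub_pos.2 hq.2).ne'
  have h₂ : (1 : ℝ) - q' ≠ 0 := (sub_pos.2 hq'.2).ne'
  have := hq.1.ne'
  have := hq'.1.ne'
  rcases le_or_gt t q with ht | ht
  · rw [bendUnit_of_le ((bendUnit_le_iff hq hq').2 ht), bendUnit_of_le ht]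
    field_simp
  · rw [bendUnit_of_lt (not_le.1 ((bendUnit_le_iff hq hq').not.2 ht.not_ge)), bendUnit_of_lt ht]
    field_simp
    ring

lemma bendUnit_zero (hq : 0 < q) : bendUnit q q' 0 = 0 := by
  rw [bendUnit_of_le hq.le, zero_mul]

lemma bendUnit_one (hq : q < 1) : bendUnit q q' 1 = 1 := by
  rw [bendUnit_of_lt hq, sub_self, zero_mul, sub_zero]

lemma bendUnit_self (hq : 0 < q) : bendUnit q q' q = q' := by
  rw [bendUnit_of_le le_rfl]
  field_simp

end bendUnit

noncomputable def bend (q q' x : ℝ) : ℝ := ⌊x⌋ + bendUnit q q' (Int.fract x)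

lemma isSTimedAutomorphism_bend {q q' : ℝ} (hq : q ∈ Set.Ioo 0 1) (hq' : q' ∈ Set.Ioo 0 1) :
    IsSTimedAutomorphism {0} (bend q q') :=
  isSTimedAutomorphism_floor_add (bendUnit_strictMono hq hq')
    (fun t => ⟨_, bendUnit_bendUnit hq' hq t⟩) (bendUnit_zero hq.1) (bendUnit_one hq.2)

lemma fract_bend {q q' : ℝ} (hq : q ∈ Set.Ioo 0 1) (hq' : q' ∈ Set.Ioo 0 1) (x : ℝ) :
    Int.fract (bend q q' x) = bendUnit q q' (Int.fract x) := by
  have h₀ : 0 ≤ bendUnit q q' (Int.fract x) :=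
    bendUnit_zero hq.1 ▸ (bendUnit_strictMono hq hq').monotone (Int.fract_nonneg x)
  have h₁ : bendUnit q q' (Int.fract x) < 1 :=
    bendUnit_one (q' := q') hq.2 ▸ bendUnit_strictMono hq hq' (Int.fract_lt_one x)
  rw [bend, Int.fract_intCast_add, Int.fract_eq_self.2 ⟨h₀, h₁⟩]

lemma exists_isSTimedAutomorphism_fract_lt (s : Finset ℝ) {ε : ℝ} (hε : ε ∈ Set.Ioc 0 1) :
    ∃ π, IsSTimedAutomorphism {0} π ∧ ∀ t ∈ s, Int.fract (π t) < ε := by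
  -- `1/2` only keeps `b` positive
  set F := insert (1 / 2 : ℝ) (s.image Int.fract)
  set b := F.max' (Finset.insert_nonempty _ _)
  have hb : b ∈ Set.Ioo 0 1 :=
    ⟨(one_half_pos).trans_le (F.le_max' _ (Finset.mem_insert_self _ _)),
      (F.max'_lt_iff _).2 (by simp [F, Int.fract_lt_one]; norm_num)⟩
  have hε' : ε / 2 ∈ Set.Ioo 0 1 := ⟨by linarith [hε.1], by linarith [hε.2]⟩
  refine ⟨bend b (ε / 2), isSTimedAutomorphism_bend hb hε', fun t ht => ?_⟩
  have htb : Int.fract t ≤ b :=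
    F.le_max' _ (Finset.mem_insert_of_mem (Finset.mem_image_of_mem _ ht))
  rw [fract_bend hb hε']
  linarith [(bendUnit_le_iff hb hε').2 htb, hε.1]

lemma exists_isSTimedAutomorphism_intOrFar (s : Finset ℝ) :
    ∃ π, IsSTimedAutomorphism {0} π ∧ ∀ t ∈ s, IntOrFar (1 / 4) (π t) := by
  -- Push the fractional parts below `1/2`, then bend the least positive one `a` to `1/2`:
  -- the positive ones land in `[1/2, 3/4]`.
  obtain ⟨π, hπ, hsmall⟩ :=
    exists_isSTimedAutomorphism_fract_lt s (ε := 1 / 2) ⟨by norm_num, by norm_num⟩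
  set F := insert (1 / 2 : ℝ) ((s.image (Int.fract ∘ π)).filter (0 < ·))
  set a := F.min' (Finset.insert_nonempty _ _)
  have ha₀ : 0 < a := (F.lt_min'_iff _).2 (by simp [F])
  have ha₁ : a ≤ 1 / 2 := F.min'_le _ (Finset.mem_insert_self _ _)
  have ha : a ∈ Set.Ioo 0 1 := ⟨ha₀, by linarith⟩
  have hhalf : (1 / 2 : ℝ) ∈ Set.Ioo 0 1 := ⟨by norm_num, by norm_num⟩
  refine ⟨bend a (1 / 2) ∘ π, (isSTimedAutomorphism_bend ha hhalf).comp hπ, fun t ht => ?_⟩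
  refine intOrFar_of_fract (by norm_num) ?_
  rw [Function.comp_apply, fract_bend ha hhalf]
  rcases (Int.fract_nonneg (π t)).eq_or_lt with h0 | hpos
  · exact .inl (by rw [← h0, bendUnit_zero ha₀])
  have haf : a ≤ Int.fract (π t) := F.min'_le _ (by simp [F, hpos]; exact .inr ⟨t, ht, rfl⟩)
  have hmono := (bendUnit_strictMono ha hhalf).monotone
  refine .inr ⟨?_, ?_⟩
  · linarith [hmono haf, bendUnit_self (q' := 1 / 2) ha₀]
  · suffices bendUnit a (1 / 2) (1 / 2) ≤ 3 / 4 by linarith [hmono (hsmall t ht).le]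
    rcases ha₁.eq_or_lt with heq | hlt
    · rw [← heq, bendUnit_self ha₀]; linarith
    · rw [bendUnit_of_lt hlt]
      rw [show (1 : ℝ) - (1 - 1 / 2) * ((1 - 1 / 2) / (1 - a)) = 1 - 1 / 4 / (1 - a) by ring]
      have : 1 / 4 ≤ 1 / 4 / (1 - a) := le_div_self (by norm_num) (by linarith) (by linarith)
      linarith

/-! ### Runs of timed automata -/

namespace TimedAutomaton

variable {A Q X : Type*} {Aut : TimedAutomaton A Q X}

lemma run_append_iff {c e : TAConfig Q X} {w₁ w₂ : List (A × ℝ)} :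
    Aut.Run c (w₁ ++ w₂) e ↔ ∃ d, Aut.Run c w₁ d ∧ Aut.Run d w₂ e := by
  induction w₁ generalizing c with
  | nil => exact ⟨fun h => ⟨c, .nil c, h⟩, fun ⟨d, hd, h⟩ => by cases hd; exact h⟩
  | cons a w₁ ih =>
    constructor
    · rintro (_ | ⟨hstep, hrun⟩)
      obtain ⟨d, h₁, h₂⟩ := ih.1 hrun
      exact ⟨d, .cons hstep h₁, h₂⟩
    · rintro ⟨d, (_ | ⟨hstep, hrun⟩), h₂⟩
      exact .cons hstep (ih.2 ⟨d, hrun, h₂⟩)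

lemma Run.isChain {c d : TAConfig Q X} {w : List (A × ℝ)} (h : Aut.Run c w d) :
    (c.2.2 :: w.map Prod.snd).IsChain (· ≤ ·) := by
  induction h with
  | nil => exact .singleton _
  | cons hstep _ ih => exact .cons_cons hstep.2.1 (hstep.1 ▸ ih)

lemma Run.isTimedWord {c d : TAConfig Q X} {w : List (A × ℝ)} (h : Aut.Run c w d)
    (hc : 0 ≤ c.2.2) : IsTimedWord w := by
  have hch := List.isChain_iff_pairwise.1 h.isChain
  rw [List.pairwise_cons] at hch
  exact ⟨fun p hp => hc.trans (hch.1 _ (List.mem_map_of_mem hp)),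
    List.isChain_iff_pairwise.2 hch.2⟩

lemma lang_subset_TW : Aut.Lang ⊆ TW A :=
  fun _ ⟨_, _, _, hrun, _⟩ => hrun.isTimedWord le_rfl

lemma Run.resetPoint_eq_or_mem {c d : TAConfig Q X} {w : List (A × ℝ)} (h : Aut.Run c w d) (x : X) :
    d.2.1 x = c.2.1 x ∨ ∃ p ∈ w, d.2.1 x = p.2 := by
  induction h with
  | nil => exact .inl rfl
  | @cons c c' d e w hstep _ ih =>
    obtain ⟨-, -, -, Y, -, -, hres, hkeep⟩ := hstep
    rcases ih with h | ⟨p, hp, h⟩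
    · by_cases hx : x ∈ Y
      · exact .inr ⟨e, List.mem_cons_self, h.trans (hres x hx)⟩
      · exact .inl (h.trans (hkeep x hx))
    · exact .inr ⟨p, List.mem_cons_of_mem e hp, h⟩

lemma Run.time_eq_of_append_singleton {c d : TAConfig Q X} {w : List (A × ℝ)} {e : A × ℝ}
    (h : Aut.Run c (w ++ [e]) d) : d.2.2 = e.2 := by
  obtain ⟨_, -, _ | ⟨hstep, _ | _⟩⟩ := run_append_iff.1 h
  exact hstep.1

lemma Step.unique (hdet : Aut.IsDeterministic) {c d₁ d₂ : TAConfig Q X} {e : A × ℝ}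
    (h₁ : Aut.Step c e d₁) (h₂ : Aut.Step c e d₂) : d₁ = d₂ := by
  obtain ⟨ht₁, -, φ₁, Y₁, hr₁, hs₁, hres₁, hkeep₁⟩ := h₁
  obtain ⟨ht₂, -, φ₂, Y₂, hr₂, hs₂, hres₂, hkeep₂⟩ := h₂
  obtain ⟨rfl, hq⟩ := hdet.2 _ _ _ _ _ _ _ _ hr₁ hr₂ ⟨_, hs₁, hs₂⟩
  have hμ : d₁.2.1 = d₂.2.1 := by
    funext x
    by_cases hx : x ∈ Y₁
    · rw [hres₁ x hx, hres₂ x hx]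
    · rw [hkeep₁ x hx, hkeep₂ x hx]
  exact Prod.ext hq (Prod.ext hμ (ht₁.trans ht₂.symm))

lemma Run.unique (hdet : Aut.IsDeterministic) {c d₁ d₂ : TAConfig Q X}
    {w : List (A × ℝ)} (h₁ : Aut.Run c w d₁) (h₂ : Aut.Run c w d₂) : d₁ = d₂ := by
  induction h₁ with
  | nil => cases h₂; rfl
  | cons hstep₁ _ ih =>
    obtain _ | ⟨hstep₂, hrun₂⟩ := h₂
    exact ih (hstep₁.unique hdet hstep₂ ▸ hrun₂)

lemma append_mem_lang_iff (hdet : Aut.IsDeterministic) {p : Q} (hp : p ∈ Aut.init)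
    {c : TAConfig Q X} {w₁ w₂ : List (A × ℝ)} (h : Aut.Run (p, fun _ => 0, 0) w₁ c) :
    w₁ ++ w₂ ∈ Aut.Lang ↔ w₂ ∈ Aut.LangFrom c := by
  constructor
  · rintro ⟨p', hp', d, hrun, hfin⟩
    obtain ⟨c', h₁, h₂⟩ := run_append_iff.1 hrun
    obtain rfl := hdet.1.unique hp' hp
    exact ⟨d, h₁.unique hdet h ▸ h₂, hfin⟩
  · rintro ⟨d, hrun, hfin⟩
    exact ⟨p, hp, d, run_append_iff.2 ⟨c, h, hrun⟩, hfin⟩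

lemma Step.map {π : ℝ → ℝ} (hπ : IsTimedAutomorphism π) {c d : TAConfig Q X} {e : A × ℝ}
    (h : Aut.Step c e d) :
    Aut.Step (c.1, π ∘ c.2.1, π c.2.2) (e.1, π e.2) (d.1, π ∘ d.2.1, π d.2.2) := by
  obtain ⟨ht, hle, φ, Y, hr, hs, hres, hkeep⟩ := h
  refine ⟨congrArg π ht, hπ.2.1.monotone hle, φ, Y, hr, (hπ.sat_map_sub_map _ _ φ).2 hs,
    fun x hx => ?_, fun x hx => ?_⟩
  · simp [hres x hx]
  · simp [hkeep x hx]

lemma Run.map {π : ℝ → ℝ} (hπ : IsTimedAutomorphism π) {c d : TAConfig Q X}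
    {w : List (A × ℝ)} (h : Aut.Run c w d) :
    Aut.Run (c.1, π ∘ c.2.1, π c.2.2) (mapTW π w) (d.1, π ∘ d.2.1, π d.2.2) := by
  induction h with
  | nil => exact .nil _
  | cons hstep _ ih => exact .cons (hstep.map hπ) ih

lemma mapTW_mem_lang {π : ℝ → ℝ} (hπ : IsSTimedAutomorphism {0} π) {w : List (A × ℝ)}
    (hw : w ∈ Aut.Lang) : mapTW π w ∈ Aut.Lang := by
  obtain ⟨p, hp, d, hrun, hfin⟩ := hw
  have h0 : π 0 = 0 := hπ.2 0 rfl
  refine ⟨p, hp, (d.1, π ∘ d.2.1, π d.2.2), ?_, hfin⟩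
  simpa [Function.comp_def, h0] using hrun.map hπ.1

lemma mapTW_mem_lang_iff {π : ℝ → ℝ} (hπ : IsSTimedAutomorphism {0} π) {w : List (A × ℝ)} :
    mapTW π w ∈ Aut.Lang ↔ w ∈ Aut.Lang := by
  obtain ⟨σ, hσ, hleft, -⟩ := hπ.exists_inverse
  refine ⟨fun h => ?_, mapTW_mem_lang hπ⟩
  simpa [mapTW, List.map_map, Function.comp_def, hleft _] using mapTW_mem_lang hσ h

lemma nil_mem_langFrom_iff {c : TAConfig Q X} : [] ∈ Aut.LangFrom c ↔ c.1 ∈ Aut.final :=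
  ⟨fun ⟨_, hrun, hfin⟩ => by cases hrun; exact hfin, fun h => ⟨c, .nil c, h⟩⟩

lemma cons_mem_langFrom_iff {c : TAConfig Q X} {e : A × ℝ} {w : List (A × ℝ)} :
    e :: w ∈ Aut.LangFrom c ↔ ∃ d, Aut.Step c e d ∧ w ∈ Aut.LangFrom d :=
  ⟨fun ⟨_, hrun, hfin⟩ => by cases hrun with | cons hstep hrun => exact ⟨_, hstep, _, hrun, hfin⟩,
    fun ⟨_, hstep, _, hrun, hfin⟩ => ⟨_, .cons hstep hrun, hfin⟩⟩

lemma mem_langFrom_iff_of_simulation {A' Q' X' : Type*} {Aut' : TimedAutomaton A' Q' X'}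
    (F : TAConfig Q' X' → TAConfig Q X) (enc : A' × ℝ → A × ℝ)
    (good : TAConfig Q' X' → Prop) (P : A' × ℝ → Prop)
    (hfwd : ∀ c d e, good c → P e → Aut'.Step c e d → Aut.Step (F c) (enc e) (F d) ∧ good d)
    (hbwd : ∀ c d e, good c → P e → Aut.Step (F c) (enc e) d → ∃ d', Aut'.Step c e d' ∧ F d' = d)
    (hfinal : ∀ c, (F c).1 ∈ Aut.final ↔ c.1 ∈ Aut'.final)
    {c : TAConfig Q' X'} (hc : good c) {w : List (A' × ℝ)} (hw : ∀ e ∈ w, P e) :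
    w.map enc ∈ Aut.LangFrom (F c) ↔ w ∈ Aut'.LangFrom c := by
  induction w generalizing c with
  | nil => rw [List.map_nil, nil_mem_langFrom_iff, nil_mem_langFrom_iff, hfinal]
  | cons e w ih =>
    have hw' : ∀ e ∈ w, P e := fun e he => hw e (List.mem_cons_of_mem _ he)
    rw [List.map_cons, cons_mem_langFrom_iff, cons_mem_langFrom_iff]
    constructor
    · rintro ⟨d, hstep, hd⟩
      obtain ⟨d', hstep', rfl⟩ := hbwd c d e hc (hw e List.mem_cons_self) hstep
      exact ⟨d', hstep', (ih (hfwd c d' e hc (hw e List.mem_cons_self) hstep').2 hw').1 hd⟩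
    · rintro ⟨d', hstep', hd'⟩
      obtain ⟨hstep, hgood⟩ := hfwd c d' e hc (hw e List.mem_cons_self) hstep'
      exact ⟨F d', hstep, (ih hgood hw').2 hd'⟩

end TimedAutomaton

section compWord

variable {A B : Type*}

def compWord (v : List (A × ℝ)) (t : ℝ) (m : List (B × ℝ)) : List ((A ⊕ Unit ⊕ B) × ℝ) :=
  (v.map fun p => (Sum.inl p.1, p.2)) ++
    (Sum.inr (Sum.inl ()), t) :: m.map fun p => (Sum.inr (Sum.inr p.1), p.2 + t)

lemma isTimedWord_iff_pairwise {w : List (A × ℝ)} :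
    IsTimedWord w ↔ (∀ p ∈ w, 0 ≤ p.2) ∧ (w.map Prod.snd).Pairwise (· ≤ ·) := by
  rw [IsTimedWord, List.Chain', List.isChain_iff_pairwise]

lemma isTimedWord_compWord_iff {v : List (A × ℝ)} {t : ℝ} {m : List (B × ℝ)} :
    IsTimedWord (compWord v t m) ↔
      IsTimedWord v ∧ (∀ p ∈ v, p.2 ≤ t) ∧ 0 ≤ t ∧ IsTimedWord m := by
  simp only [isTimedWord_iff_pairwise, compWord, List.map_append, List.map_cons, List.map_map,
    List.pairwise_append, List.pairwise_cons, List.pairwise_map, List.mem_append, List.mem_cons,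
    List.mem_map, Function.comp_def, or_imp, forall_and, forall_exists_index, and_imp,
    forall_apply_eq_imp_iff₂, forall_eq, add_le_add_iff_right, le_add_iff_nonneg_left]
  constructor
  · rintro ⟨⟨hv, ht, -⟩, hvc, ⟨hm, hmc⟩, hvt, -⟩
    exact ⟨⟨hv, hvc⟩, hvt, ht, hm, hmc⟩
  · rintro ⟨⟨hv, hvc⟩, hvt, ht, hm, hmc⟩
    exact ⟨⟨hv, ht, fun p hp => add_nonneg (hm p hp) ht⟩, hvc, ⟨hm, hmc⟩, hvt,
      fun p hp q hq => (hvt p hp).trans (le_add_of_nonneg_left (hm q hq))⟩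

lemma compWord_injective {v v' : List (A × ℝ)} {t t' : ℝ} {m m' : List (B × ℝ)}
    (h : compWord v t m = compWord v' t' m') : v = v' ∧ t = t' ∧ m = m' := by
  induction v generalizing v' with
  | nil =>
    obtain _ | ⟨a', v'⟩ := v'
    · simp only [compWord, List.map_nil, List.nil_append, List.cons.injEq, Prod.mk.injEq,
        true_and] at h
      obtain ⟨rfl, h⟩ := h
      refine ⟨rfl, rfl, List.map_injective_iff.2 (fun p p' hp => ?_) h⟩
      simp only [Prod.mk.injEq, Sum.inr.injEq, add_left_inj] at hp
      exact Prod.ext hp.1 hp.2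
    · simp [compWord] at h
  | cons a v ih =>
    obtain _ | ⟨a', v'⟩ := v'
    · simp [compWord] at h
    · simp only [compWord, List.map_cons, List.cons_append, List.cons.injEq, Prod.mk.injEq,
        Sum.inl.injEq] at h
      obtain ⟨⟨h₁, h₂⟩, h⟩ := h
      obtain ⟨rfl, rfl, rfl⟩ := ih h
      exact ⟨by rw [Prod.ext h₁ h₂], rfl, rfl⟩

lemma compWord_mem_compLang_iff {P : Set (List (A × ℝ))} {K : Set (List (B × ℝ))}
    {v : List (A × ℝ)} {t : ℝ} {m : List (B × ℝ)} :
    compWord v t m ∈ compLang P K ↔ v ∈ P ∧ m ∈ K ∧ IsTimedWord (compWord v t m) := by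
  constructor
  · rintro ⟨v', hv', t', m', hm', heq, hw⟩
    obtain ⟨rfl, rfl, rfl⟩ := compWord_injective heq
    exact ⟨hv', hm', hw⟩
  · rintro ⟨hv, hm, hw⟩
    exact ⟨v, hv, t, m, hm, rfl, hw⟩

variable {L : Set (List (A × ℝ))} {M : Set (List (B × ℝ))} {v : List (A × ℝ)} {t : ℝ}

lemma compWord_mem_compLang_union_iff_of_mem (hM : M ⊆ TW B) (hvL : v ∈ L)
    (ht : 0 ≤ t) (hvt : ∀ p ∈ v, p.2 ≤ t) (hv : v ∈ TW A) (m : List (B × ℝ)) :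
    compWord v t m ∈ compLang L (TW B) ∪ compLang (TW A) M ↔ m ∈ TW B := by
  simp only [Set.mem_union, compWord_mem_compLang_iff, isTimedWord_compWord_iff]
  refine ⟨?_, fun hm => .inl ⟨hvL, hm, hv, hvt, ht, hm⟩⟩
  rintro (⟨-, hm, -⟩ | ⟨-, hm, -⟩)
  exacts [hm, hM hm]

lemma compWord_mem_compLang_union_iff_of_notMem (hM : M ⊆ TW B) (hvL : v ∉ L)
    (ht : 0 ≤ t) (hvt : ∀ p ∈ v, p.2 ≤ t) (hv : v ∈ TW A) (m : List (B × ℝ)) :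
    compWord v t m ∈ compLang L (TW B) ∪ compLang (TW A) M ↔ m ∈ M := by
  simp only [Set.mem_union, compWord_mem_compLang_iff, isTimedWord_compWord_iff]
  refine ⟨?_, fun hm => .inr ⟨hv, hm, hv, hvt, ht, hM hm⟩⟩
  rintro (⟨hv', -⟩ | ⟨-, hm, -⟩)
  exacts [absurd hv' hvL, hm]


lemma mapTW_compWord {π : ℝ → ℝ} (hπ : IsSTimedAutomorphism {0} π)
    (v : List (A × ℝ)) (n : ℤ) (m : List (B × ℝ)) :
    mapTW π (compWord v n m) = compWord (mapTW π v) n (mapTW π m) := by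
  simp [mapTW, compWord, hπ.map_intCast, Function.comp_def, hπ.1.map_add_intCast]

lemma compWord_eq_append (v : List (A × ℝ)) (t : ℝ) (m : List (B × ℝ)) :
    compWord v t m = compWord v t [] ++ m.map fun p => (Sum.inr (Sum.inr p.1), p.2 + t) := by
  simp [compWord]

end compWord

namespace DFA

variable {A Q : Type*} (D : DFA A Q) (X : Type*)

def toTimedAutomaton : TimedAutomaton A Q X where
  init := {D.start}
  final := D.accept
  rules := {r | ∃ p a, r = (p, a, .tt, ∅, D.step p a)}

variable {D X}

lemma toTimedAutomaton_isDeterministic : (D.toTimedAutomaton X).IsDeterministic := by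
  refine ⟨⟨D.start, rfl, fun _ h => h⟩, ?_⟩
  rintro p a φ Y q φ' Y' q' ⟨p₁, a₁, h₁⟩ ⟨p₂, a₂, h₂⟩ -
  simp only [Prod.mk.injEq] at h₁ h₂
  obtain ⟨rfl, rfl, -, rfl, rfl⟩ := h₁
  obtain ⟨rfl, rfl, -, rfl, rfl⟩ := h₂
  exact ⟨rfl, rfl⟩

lemma toTimedAutomaton_run_fst {c d : TAConfig Q X} {w : List (A × ℝ)}
    (h : (D.toTimedAutomaton X).Run c w d) : d.1 = D.evalFrom c.1 (w.map Prod.fst) := by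
  induction h with
  | nil => rfl
  | cons hstep _ ih =>
    obtain ⟨-, -, φ, Y, ⟨p, a, hr⟩, -⟩ := hstep
    simp only [Prod.mk.injEq] at hr
    obtain ⟨rfl, rfl, -, -, hq⟩ := hr
    rw [ih, List.map_cons, evalFrom_cons, ← hq]

lemma toTimedAutomaton_exists_run (p : Q) (ν : X → ℝ) {t : ℝ} {w : List (A × ℝ)}
    (h : (t :: w.map Prod.snd).IsChain (· ≤ ·)) :
    ∃ d, (D.toTimedAutomaton X).Run (p, ν, t) w d := by
  induction w generalizing p t with
  | nil => exact ⟨_, .nil _⟩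
  | cons e w ih =>
    obtain ⟨hte, hch⟩ := List.isChain_cons_cons.1 h
    obtain ⟨d, hd⟩ := ih (D.step p e.1) hch
    have hstep : (D.toTimedAutomaton X).Step (p, ν, t) e (D.step p e.1, ν, e.2) :=
      ⟨rfl, hte, .tt, ∅, ⟨p, e.1, rfl⟩, trivial, fun _ h => h.elim, fun _ _ => rfl⟩
    exact ⟨d, .cons hstep hd⟩

lemma lang_toTimedAutomaton :
    (D.toTimedAutomaton X).Lang = {w | IsTimedWord w ∧ w.map Prod.fst ∈ D.accepts} := by
  ext w
  constructor
  · rintro ⟨_, rfl, d, hrun, hfin⟩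
    refine ⟨hrun.isTimedWord le_rfl, ?_⟩
    rwa [DFA.mem_accepts, DFA.eval, ← toTimedAutomaton_run_fst hrun]
  · rintro ⟨hw, hacc⟩
    have hch : (0 :: w.map Prod.snd).IsChain (· ≤ ·) := by
      rw [List.isChain_iff_pairwise, List.pairwise_cons]
      exact ⟨by simpa using fun b a hp => hw.1 (a, b) hp, List.isChain_iff_pairwise.1 hw.2⟩
    obtain ⟨d, hrun⟩ := toTimedAutomaton_exists_run D.start (fun _ => 0) hch
    refine ⟨D.start, rfl, d, hrun, ?_⟩
    rwa [DFA.mem_accepts, DFA.eval, ← toTimedAutomaton_run_fst hrun] at hacc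

lemma recognisableByDTA {Q : Type} [Finite Q] (D : DFA A Q) (k : ℕ) :
    RecognisableByDTA k {w | IsTimedWord w ∧ w.map Prod.fst ∈ D.accepts} :=
  ⟨Q, inferInstance, D.toTimedAutomaton _, toTimedAutomaton_isDeterministic,
    lang_toTimedAutomaton⟩

end DFA

lemma recognisableByDTA_TW (k : ℕ) (A : Type*) : RecognisableByDTA k (TW A) := by
  convert (⟨fun _ _ => (), (), Set.univ⟩ : DFA A Unit).recognisableByDTA k
  simp [TW, DFA.mem_accepts]

lemma recognisableByDTA_empty (k : ℕ) (A : Type*) :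
    RecognisableByDTA k (∅ : Set (List (A × ℝ))) := by
  convert (⟨fun _ _ => (), (), ∅⟩ : DFA A Unit).recognisableByDTA k
  simp [DFA.mem_accepts]

section compShape

variable (A B : Type*)

/-- Accepts the letter pattern `Σ* $ Γ*`; `none` is a sink. -/
def compShapeDFA : DFA (A ⊕ Unit ⊕ B) (Option Bool) where
  step
    | some false, .inl _ => some false
    | some false, .inr (.inl _) => some true
    | some true, .inr (.inr _) => some true
    | _, _ => none
  start := some false
  accept := {some true}

variable {A B}

lemma compShapeDFA_evalFrom_none (x : List (A ⊕ Unit ⊕ B)) :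
    (compShapeDFA A B).evalFrom none x = none := by
  induction x with
  | nil => rfl
  | cons a x ih => rwa [DFA.evalFrom_cons]

lemma compShapeDFA_evalFrom_true_iff (t : ℝ) (w : List ((A ⊕ Unit ⊕ B) × ℝ)) :
    (compShapeDFA A B).evalFrom (some true) (w.map Prod.fst) = some true ↔
      ∃ m : List (B × ℝ), w = m.map fun p => (Sum.inr (Sum.inr p.1), p.2 + t) := by
  induction w with
  | nil => exact ⟨fun _ => ⟨[], rfl⟩, fun _ => rfl⟩
  | cons e w ih =>
    obtain ⟨a | _ | b, s⟩ := e <;>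
      simp only [List.map_cons, DFA.evalFrom_cons]
    · rw [show (compShapeDFA A B).step (some true) (.inl a) = none from rfl,
        compShapeDFA_evalFrom_none]
      simp only [reduceCtorEq, false_iff]
      rintro ⟨_ | _, h⟩ <;> simp at h
    · rw [show (compShapeDFA A B).step (some true) (.inr (.inl ())) = none from rfl,
        compShapeDFA_evalFrom_none]
      simp only [reduceCtorEq, false_iff]
      rintro ⟨_ | _, h⟩ <;> simp at h
    · refine ih.trans ⟨fun ⟨m, hm⟩ => ⟨(b, s - t) :: m, by simp [hm]⟩, ?_⟩
      rintro ⟨_ | ⟨p, m⟩, h⟩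
      · simp at h
      · simp only [List.map_cons, List.cons.injEq] at h
        exact ⟨m, h.2⟩

lemma compShapeDFA_evalFrom_false_iff (w : List ((A ⊕ Unit ⊕ B) × ℝ)) :
    (compShapeDFA A B).evalFrom (some false) (w.map Prod.fst) = some true ↔
      ∃ v t m, w = compWord v t m := by
  induction w with
  | nil => simp [compWord]
  | cons e w ih =>
    obtain ⟨a | _ | b, s⟩ := e <;>
      simp only [List.map_cons, DFA.evalFrom_cons]
    · refine ih.trans ⟨fun ⟨v, t, m, h⟩ => ⟨(a, s) :: v, t, m, by simp [h, compWord]⟩, ?_⟩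
      rintro ⟨_ | ⟨p, v⟩, t, m, h⟩
      · simp [compWord] at h
      · simp only [compWord, List.map_cons, List.cons_append, List.cons.injEq] at h
        exact ⟨v, t, m, h.2⟩
    · refine (compShapeDFA_evalFrom_true_iff s w).trans
        ⟨fun ⟨m, h⟩ => ⟨[], s, m, by simp [h, compWord]⟩, ?_⟩
      rintro ⟨_ | ⟨p, v⟩, t, m, h⟩
      · simp only [compWord, List.map_nil, List.nil_append, List.cons.injEq, Prod.mk.injEq] at h
        obtain ⟨⟨-, rfl⟩, h⟩ := h
        exact ⟨m, h⟩
      · simp [compWord] at h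
    · rw [show (compShapeDFA A B).step (some false) (.inr (.inr b)) = none from rfl,
        compShapeDFA_evalFrom_none]
      simp only [reduceCtorEq, false_iff]
      rintro ⟨_ | ⟨p, v⟩, t, m, h⟩ <;> simp [compWord] at h

lemma compLang_TW_TW :
    compLang (TW A) (TW B) =
      {w | IsTimedWord w ∧ w.map Prod.fst ∈ (compShapeDFA A B).accepts} := by
  ext w
  simp only [Set.mem_ofPred_eq, DFA.mem_accepts, DFA.eval]
  constructor
  · rintro ⟨v, -, t, m, -, rfl, hw⟩
    exact ⟨hw, (compShapeDFA_evalFrom_false_iff _).2 ⟨v, t, m, rfl⟩⟩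
  · rintro ⟨hw, hacc⟩
    obtain ⟨v, t, m, rfl⟩ := (compShapeDFA_evalFrom_false_iff _).1 hacc
    obtain ⟨hv, -, -, hm⟩ := isTimedWord_compWord_iff.1 hw
    exact compWord_mem_compLang_iff.2 ⟨hv, hm, hw⟩

end compShape

/-! ### Rounding guards -/

/-- `c.round (compare r n)` replaces the test `· c r`, for `r` within `ε` of the integer `n`, by
a test against `n` that agrees with it on values which are integers or `ε`-far from `ℤ`;
`none` is the test that always fails. -/
def CmpOp.round : CmpOp → Ordering → Option CmpOp
  | c, .eq => some c
  | .eq, _ => none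
  | .lt, .gt | .le, .gt => some .le
  | .ge, .gt | .gt, .gt => some .gt
  | .lt, .lt | .le, .lt => some .lt
  | .ge, .lt | .gt, .lt => some .ge

lemma CmpOp.holds_add_iff (c : CmpOp) (a d b : ℝ) : c.holds (a + d) b ↔ c.holds a (b - d) := by
  cases c <;> simp only [CmpOp.holds] <;> constructor <;> intro h <;> linarith

lemma CmpOp.holds_iff_round {c : CmpOp} {ε V r : ℝ} {n : ℤ} (hr : |r - n| < ε)
    (hV : r = n ∨ IntOrFar ε V) :
    c.holds V r ↔ ∃ c' ∈ c.round (compare r n), c'.holds V n := by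
  obtain ⟨hr₁, hr₂⟩ := abs_lt.1 hr
  rcases lt_trichotomy r n with hrn | rfl | hrn
  · rcases (hV.resolve_left hrn.ne).le_or_eq_or_le n with h | h | h <;>
      rw [(compare_lt_iff_lt).2 hrn] <;> cases c <;>
      simp [CmpOp.round, CmpOp.holds] <;>
      first | (constructor <;> intro <;> linarith) | (intro; linarith)
  · simp [CmpOp.round]
  · rcases (hV.resolve_left hrn.ne').le_or_eq_or_le n with h | h | h <;>
      rw [(compare_gt_iff_gt).2 hrn] <;> cases c <;>
      simp [CmpOp.round, CmpOp.holds] <;>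
      first | (constructor <;> intro <;> linarith) | (intro; linarith)

namespace ClockConstraint

variable {X : Type*}

noncomputable def roundAtom (mk : CmpOp → ℤ → ClockConstraint X) (c : CmpOp) (r : ℝ) :
    ClockConstraint X :=
  match c.round (compare r (round r)) with
  | some c' => mk c' (round r)
  | none => ff

lemma sat_roundAtom {ν : X → ℝ} {mk : CmpOp → ℤ → ClockConstraint X} {V : ℝ}
    (hmk : ∀ c n, (mk c n).sat ν ↔ c.holds V n) {ε r : ℝ} (hr : ∃ n : ℤ, |r - n| < ε)
    (hV : (∃ n : ℤ, r = n) ∨ IntOrFar ε V) (c : CmpOp) :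
    (roundAtom mk c r).sat ν ↔ c.holds V r := by
  obtain ⟨n, hn⟩ := hr
  have hround : |r - round r| < ε := (round_le r n).trans_lt hn
  have hV' : r = round r ∨ IntOrFar ε V := by
    refine hV.imp_left fun ⟨m, hm⟩ => ?_
    rw [hm, round_intCast]
  rw [CmpOp.holds_iff_round hround hV', roundAtom]
  cases c.round (compare r (round r)) <;> simp [sat, hmk]

noncomputable def offset (δ : X → ℝ) : ClockConstraint X → ClockConstraint X
  | tt => tt
  | ff => ff
  | diff x y c z => roundAtom (diff x y) c (z - (δ x - δ y))
  | single x c z => roundAtom (single x) c (z - δ x)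
  | not φ => not (offset δ φ)
  | and φ ψ => and (offset δ φ) (offset δ ψ)
  | or φ ψ => or (offset δ φ) (offset δ ψ)

lemma sat_offset {ε : ℝ} {δ ν : X → ℝ} (hδ : ∀ x, ∃ n : ℤ, n - ε < δ x ∧ δ x ≤ n)
    (hν : ∀ x, (∃ n : ℤ, δ x = n) ∨ IntOrFar ε (ν x))
    (hνν : ∀ x y, (∃ n : ℤ, δ x - δ y = n) ∨ IntOrFar ε (ν x - ν y))
    (φ : ClockConstraint X) :
    (offset δ φ).sat ν ↔ φ.sat fun x => ν x + δ x := by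
  induction φ with
  | tt | ff => rfl
  | diff x y c z =>
    have hshift : ν x + δ x - (ν y + δ y) = (ν x - ν y) + (δ x - δ y) := by ring
    rw [offset, sat, hshift, CmpOp.holds_add_iff]
    refine sat_roundAtom (ε := ε) (fun _ _ => Iff.rfl) ?_ ?_ c
    · obtain ⟨n, hn₁, hn₂⟩ := hδ x
      obtain ⟨m, hm₁, hm₂⟩ := hδ y
      exact ⟨z - (n - m), by push_cast; rw [abs_lt]; constructor <;> linarith⟩
    · exact (hνν x y).imp_left fun ⟨n, hn⟩ => ⟨z - n, by push_cast; rw [hn]⟩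
  | single x c z =>
    rw [offset, sat, CmpOp.holds_add_iff]
    refine sat_roundAtom (ε := ε) (fun _ _ => Iff.rfl) ?_ ?_ c
    · obtain ⟨n, hn₁, hn₂⟩ := hδ x
      exact ⟨z - n, by push_cast; rw [abs_lt]; constructor <;> linarith⟩
    · exact (hν x).imp_left fun ⟨n, hn⟩ => ⟨z - n, by push_cast; rw [hn]⟩
  | not φ ih => exact ih.not
  | and φ ψ ih₁ ih₂ => exact and_congr ih₁ ih₂
  | or φ ψ ih₁ ih₂ => exact or_congr ih₁ ih₂

def conj : List (ClockConstraint X) → ClockConstraint X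
  | [] => tt
  | φ :: l => and φ (conj l)

lemma sat_conj {ν : X → ℝ} (l : List (ClockConstraint X)) :
    (conj l).sat ν ↔ ∀ φ ∈ l, φ.sat ν := by
  induction l with
  | nil => simp [conj, sat]
  | cons φ l ih => simp [conj, sat, ih]

open Classical in
noncomputable def eqOff [Fintype X] (β : Set X) : ClockConstraint X :=
  conj <| (Finset.univ : Finset (X × X)).toList.map fun p =>
    if p.1 ∈ β ∨ p.2 ∈ β then tt else diff p.1 p.2 .eq 0

lemma sat_eqOff [Fintype X] {ν : X → ℝ} (β : Set X) :
    (eqOff β).sat ν ↔ ∀ x ∉ β, ∀ y ∉ β, ν x = ν y := by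
  classical
  simp only [eqOff, sat_conj, List.forall_mem_map, Finset.mem_toList, Finset.mem_univ,
    forall_const, Prod.forall]
  refine ⟨fun h x hx y hy => ?_, fun h x y => ?_⟩
  · simpa [if_neg (not_or.2 ⟨hx, hy⟩), sat, CmpOp.holds, sub_eq_zero] using h x y
  · split_ifs with hxy
    · trivial
    · obtain ⟨hx, hy⟩ := not_or.1 hxy
      simp [sat, CmpOp.holds, h x hx y hy]

end ClockConstraint

/-! ### Restarting an automaton -/

namespace TimedAutomaton

section restart

open Classical

variable {A G Q X : Type*} [Fintype X]

/-- The automaton that simulates `Aut` from a location `q` in which each clock `x` is ahead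
by `δ x`, reading `b ∈ G` as `f b`. Its locations record which clocks have been reset since the
start; those that have not all carry the same value, which `eqOff` makes explicit for the sake
of determinism. -/
noncomputable def restart (Aut : TimedAutomaton A Q X) (f : G → A) (q : Q) (δ : X → ℝ) :
    TimedAutomaton G (Q × Set X) X where
  init := {(q, ∅)}
  final := {p | p.1 ∈ Aut.final}
  rules := {r | ∃ p β b φ Y q', (p, f b, φ, Y, q') ∈ Aut.rules ∧
    r = ((p, β), b, (φ.offset (βᶜ.indicator δ)).and (ClockConstraint.eqOff β), Y, (q', β ∪ Y))}

/-- Holds along runs of `restart` from its initial configuration on words whose timestamps are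
integers or `ε`-far from `ℤ`. -/
def RestartGood (ε : ℝ) (β : Set X) (ρ : X → ℝ) (s : ℝ) : Prop :=
  (∀ x ∉ β, ρ x = 0) ∧ IntOrFar ε s ∧ ∀ x, IntOrFar ε (ρ x)

lemma sat_restart_guard {ε : ℝ} (hε : ε ∈ Set.Ioc 0 1) {μ : X → ℝ}
    (hμ : ∀ x, Int.fract (μ x) < ε) (t₀ : ℤ) {β : Set X} {ρ : X → ℝ} {s : ℝ}
    (hgood : RestartGood ε β ρ s) (φ : ClockConstraint X) :
    ((φ.offset (βᶜ.indicator fun x => t₀ - μ x)).and (ClockConstraint.eqOff β)).sat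
        (fun x => s - ρ x) ↔
      φ.sat fun x => s + t₀ - if x ∈ β then ρ x + t₀ else μ x := by
  obtain ⟨hρ₀, hs, hρ⟩ := hgood
  set δ : X → ℝ := βᶜ.indicator fun x => t₀ - μ x
  have hδ_mem : ∀ x ∈ β, δ x = 0 := fun x hx => Set.indicator_of_notMem (by simpa) _
  have hδ_notMem : ∀ x ∉ β, δ x = t₀ - μ x := fun x hx => Set.indicator_of_mem hx _
  have hδ : ∀ x, ∃ n : ℤ, n - ε < δ x ∧ δ x ≤ n := by
    intro x
    by_cases hx : x ∈ β
    · exact ⟨0, by simp [hδ_mem x hx, hε.1]⟩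
    · refine ⟨t₀ - ⌊μ x⌋, ?_⟩
      have := Int.floor_add_fract (μ x)
      rw [hδ_notMem x hx]
      push_cast
      constructor <;> linarith [hμ x, Int.fract_nonneg (μ x)]
  have hν : ∀ x, (∃ n : ℤ, δ x = n) ∨ IntOrFar ε (s - ρ x) := by
    intro x
    by_cases hx : x ∈ β
    · exact .inl ⟨0, by simp [hδ_mem x hx]⟩
    · exact .inr (by rwa [hρ₀ x hx, sub_zero])
  have hνν : ∀ x y, (∃ n : ℤ, δ x - δ y = n) ∨ IntOrFar ε (s - ρ x - (s - ρ y)) := by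
    intro x y
    rw [sub_sub_sub_cancel_left]
    by_cases hx : x ∈ β
    · by_cases hy : y ∈ β
      · exact .inl ⟨0, by simp [hδ_mem x hx, hδ_mem y hy]⟩
      · exact .inr (by simpa [hρ₀ y hy] using (hρ x).neg)
    · exact .inr (by rw [hρ₀ x hx, sub_zero]; exact hρ y)
  have hval : (fun x => s - ρ x + δ x) = fun x => s + t₀ - if x ∈ β then ρ x + t₀ else μ x := by
    funext x
    by_cases hx : x ∈ β
    · simp only [hx, if_true, hδ_mem x hx]
      ring
    · simp only [hx, if_false, hδ_notMem x hx, hρ₀ x hx]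
      ring
  have heq : (ClockConstraint.eqOff β).sat fun x => s - ρ x :=
    (ClockConstraint.sat_eqOff β).2 fun x hx y hy => by rw [hρ₀ x hx, hρ₀ y hy]
  rw [ClockConstraint.sat, ClockConstraint.sat_offset hδ hν hνν, hval, and_iff_left heq]

noncomputable def restartConfig (μ : X → ℝ) (t₀ : ℝ) (c : TAConfig (Q × Set X) X) :
    TAConfig Q X :=
  (c.1.1, fun x => if x ∈ c.1.2 then c.2.1 x + t₀ else μ x, c.2.2 + t₀)

variable {Aut : TimedAutomaton A Q X} {f : G → A} {q : Q} {ε : ℝ} {μ : X → ℝ}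

lemma restart_step_simulate (hε : ε ∈ Set.Ioc 0 1) (hμ : ∀ x, Int.fract (μ x) < ε) (t₀ : ℤ)
    {c d : TAConfig (Q × Set X) X} {e : G × ℝ} (hc : RestartGood ε c.1.2 c.2.1 c.2.2)
    (he : IntOrFar ε e.2) (h : (Aut.restart f q fun x => t₀ - μ x).Step c e d) :
    Aut.Step (restartConfig μ t₀ c) (f e.1, e.2 + t₀) (restartConfig μ t₀ d) ∧
      RestartGood ε d.1.2 d.2.1 d.2.2 := by
  obtain ⟨⟨p, β⟩, ρ, s⟩ := c
  obtain ⟨⟨q', β'⟩, ρ', s'⟩ := d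
  obtain ⟨rfl, hle, ψ, Y, ⟨p, β, b, φ, Y, q', hrule, hreq⟩, hsat, hres, hkeep⟩ := h
  simp only [Prod.mk.injEq] at hreq
  obtain ⟨⟨rfl, rfl⟩, rfl, rfl, rfl, rfl, rfl⟩ := hreq
  obtain ⟨hρ₀, -, hρ⟩ := hc
  simp only at hle hres hkeep hρ₀ hρ
  refine ⟨⟨rfl, by simpa [restartConfig] using hle, φ, Y, hrule,
    (sat_restart_guard hε hμ t₀ ⟨hρ₀, he, hρ⟩ φ).1 hsat, fun x hx => ?_, fun x hx => ?_⟩,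
    fun x hx => ?_, he, fun x => ?_⟩
  · simp [restartConfig, hx, hres x hx]
  · simp [restartConfig, hx, hkeep x hx]
  · simp only [Set.mem_union, not_or] at hx ⊢
    rw [hkeep x hx.2, hρ₀ x hx.1]
  · simp only
    by_cases hx : x ∈ Y
    · rw [hres x hx]; exact he
    · rw [hkeep x hx]; exact hρ x

lemma restart_step_lift (hε : ε ∈ Set.Ioc 0 1) (hμ : ∀ x, Int.fract (μ x) < ε) (t₀ : ℤ)
    {c : TAConfig (Q × Set X) X} {d : TAConfig Q X} {e : G × ℝ}
    (hc : RestartGood ε c.1.2 c.2.1 c.2.2) (he : IntOrFar ε e.2)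
    (h : Aut.Step (restartConfig μ t₀ c) (f e.1, e.2 + t₀) d) :
    ∃ d', (Aut.restart f q fun x => t₀ - μ x).Step c e d' ∧ restartConfig μ t₀ d' = d := by
  obtain ⟨⟨p, β⟩, ρ, s⟩ := c
  obtain ⟨q', μ', τ⟩ := d
  obtain ⟨rfl, hle, φ, Y, hrule, hsat, hres, hkeep⟩ := h
  obtain ⟨hρ₀, -, hρ⟩ := hc
  simp only [restartConfig] at hrule hsat hres hkeep
  refine ⟨((q', β ∪ Y), fun x => if x ∈ Y then e.2 else ρ x, e.2),
    ⟨rfl, by simpa [restartConfig] using hle, _, Y, ⟨p, β, e.1, φ, Y, q', hrule, rfl⟩,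
      (sat_restart_guard hε hμ t₀ ⟨hρ₀, he, hρ⟩ φ).2 hsat, fun x hx => if_pos hx,
      fun x hx => if_neg hx⟩, ?_⟩
  refine Prod.ext rfl (Prod.ext (funext fun x => ?_) rfl)
  by_cases hx : x ∈ Y
  · simp [restartConfig, hx, ← hres x hx]
  · simp [restartConfig, hx, hkeep x hx]

lemma mem_restart_lang_iff (hε : ε ∈ Set.Ioc 0 1) (hμ : ∀ x, Int.fract (μ x) < ε) (t₀ : ℤ)
    {w : List (G × ℝ)} (hw : ∀ e ∈ w, IntOrFar ε e.2) :
    w ∈ (Aut.restart f q fun x => t₀ - μ x).Lang ↔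
      w.map (fun e => (f e.1, e.2 + (t₀ : ℝ))) ∈ Aut.LangFrom (q, μ, (t₀ : ℝ)) := by
  have hinit : restartConfig μ t₀ ((q, ∅), fun _ => 0, 0) = (q, μ, (t₀ : ℝ)) := by
    simp [restartConfig]
  rw [← hinit, mem_langFrom_iff_of_simulation (restartConfig μ t₀) _
    (fun c => RestartGood ε c.1.2 c.2.1 c.2.2) (fun e => IntOrFar ε e.2)
    (fun _ _ _ hc he h => restart_step_simulate hε hμ t₀ hc he h)
    (fun _ _ _ hc he h => restart_step_lift hε hμ t₀ hc he h) (fun _ => Iff.rfl)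
    ⟨fun _ _ => rfl, IntOrFar.zero hε.2, fun _ => IntOrFar.zero hε.2⟩ hw]
  exact ⟨fun ⟨_, rfl, h⟩ => h, fun h => ⟨_, rfl, h⟩⟩

lemma exists_restartGood_of_sat_eqOff {ν : X → ℝ} {β : Set X}
    (hν : (ClockConstraint.eqOff β).sat ν) :
    ∃ ρ s, RestartGood (1 / 4) β ρ s ∧
      ∀ ψ : ClockConstraint X, ψ.sat (fun x => s - ρ x) ↔ ψ.sat ν := by
  -- Write `ν = t - ρ`, where `t` is the common value of the clocks outside `β`, and squeeze
  -- `t` and `ρ` by a `ℤ`-fixing automorphism, which preserves all guards.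
  obtain ⟨t, ht⟩ : ∃ t, ∀ x ∉ β, ν x = t := by
    by_cases h : ∃ x, x ∉ β
    · obtain ⟨x₀, hx₀⟩ := h
      exact ⟨ν x₀, fun x hx => (ClockConstraint.sat_eqOff β).1 hν x hx x₀ hx₀⟩
    · exact ⟨0, fun x hx => absurd ⟨x, hx⟩ h⟩
  obtain ⟨π, hπ, hgood⟩ :=
    exists_isSTimedAutomorphism_intOrFar (insert t (Finset.univ.image fun x => t - ν x))
  refine ⟨fun x => π (t - ν x), π t, ⟨fun x hx => ?_, hgood t (Finset.mem_insert_self _ _),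
    fun x => hgood _ (Finset.mem_insert_of_mem (Finset.mem_image_of_mem _ (Finset.mem_univ x)))⟩,
    fun ψ => ?_⟩
  · show π (t - ν x) = 0
    rw [ht x hx, sub_self, hπ.2 0 rfl]
  · rw [hπ.1.sat_map_sub_map]
    simp only [sub_sub_cancel]

lemma restart_isDeterministic (hdet : Aut.IsDeterministic) (hμ : ∀ x, Int.fract (μ x) < 1 / 4)
    (t₀ : ℤ) : (Aut.restart f q fun x => t₀ - μ x).IsDeterministic := by
  refine ⟨⟨(q, ∅), rfl, fun _ h => h⟩, ?_⟩
  rintro _ _ _ _ _ _ _ _ ⟨p, β, b, φ₁, Y₁, q₁, hr₁, h₁⟩ ⟨p', β', b', φ₂, Y₂, q₂, hr₂, h₂⟩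
    ⟨ν, hs₁, hs₂⟩
  simp only [Prod.mk.injEq] at h₁ h₂
  obtain ⟨⟨rfl, rfl⟩, rfl, rfl, rfl, rfl⟩ := h₁
  obtain ⟨⟨rfl, rfl⟩, rfl, rfl, rfl, rfl⟩ := h₂
  obtain ⟨ρ, s, hgood, hiff⟩ := exists_restartGood_of_sat_eqOff hs₁.2
  have hguard := fun φ => sat_restart_guard ⟨by norm_num, by norm_num⟩ hμ t₀ hgood φ
  obtain ⟨rfl, rfl⟩ := hdet.2 _ _ _ _ _ _ _ _ hr₁ hr₂
    ⟨_, (hguard φ₁).1 ((hiff _).2 hs₁), (hguard φ₂).1 ((hiff _).2 hs₂)⟩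
  exact ⟨rfl, rfl⟩

end restart

end TimedAutomaton

/-! ### Residuals of deterministic timed automata -/

theorem recognisableByDTA_of_residual {k : ℕ} {A G Loc : Type} [Finite Loc]
    {B : TimedAutomaton A Loc (Fin k)} (hdet : B.IsDeterministic) {M : Set (List (G × ℝ))}
    (hM : M ⊆ TW G) (hMinv : ∀ π, IsSTimedAutomorphism {0} π → ∀ m, mapTW π m ∈ M ↔ m ∈ M)
    (f : G → A) {w₀ : List (A × ℝ)} (hw₀ : ∀ p ∈ w₀, Int.fract p.2 < 1 / 4) (a : A) (n : ℤ)
    (hres : ∀ m, (w₀ ++ [(a, (n : ℝ))]) ++ m.map (fun p => (f p.1, p.2 + (n : ℝ))) ∈ B.Lang ↔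
      m ∈ M) :
    RecognisableByDTA k M := by
  obtain ⟨p₀, hp₀, -⟩ := hdet.1
  by_cases hrun : ∃ c, B.Run (p₀, fun _ => 0, 0) (w₀ ++ [(a, (n : ℝ))]) c
  swap
  · convert recognisableByDTA_empty k G
    refine Set.eq_empty_of_forall_notMem fun m hm => hrun ?_
    obtain ⟨p, hp, d, hd, -⟩ := (hres m).2 hm
    obtain rfl := hdet.1.unique hp hp₀
    obtain ⟨c, hc, -⟩ := run_append_iff.1 hd
    exact ⟨c, hc⟩
  obtain ⟨⟨q, μ, τ⟩, hrun⟩ := hrun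
  obtain rfl : τ = n := hrun.time_eq_of_append_singleton
  have hμ : ∀ x, Int.fract (μ x) < 1 / 4 := by
    intro x
    rcases hrun.resetPoint_eq_or_mem x with h | ⟨p, hp, h⟩
    · simp only at h
      rw [h, Int.fract_zero]
      norm_num
    · simp only at h
      rw [h]
      rcases List.mem_append.1 hp with hp | hp
      · exact hw₀ p hp
      · rw [List.mem_singleton.1 hp, Int.fract_intCast]
        norm_num
  have hlang : ∀ m, m ∈ M ↔ m.map (fun p => (f p.1, p.2 + (n : ℝ))) ∈ B.LangFrom (q, μ, n) :=
    fun m => (hres m).symm.trans (append_mem_lang_iff hdet hp₀ hrun)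
  refine ⟨Loc × Set (Fin k), inferInstance, B.restart f q fun x => n - μ x,
    restart_isDeterministic hdet hμ n, Set.ext fun m => ?_⟩
  by_cases hm : m ∈ TW G
  · obtain ⟨σ, hσ, hgood⟩ := exists_isSTimedAutomorphism_intOrFar (m.map Prod.snd).toFinset
    rw [← mapTW_mem_lang_iff hσ, ← hMinv σ hσ, hlang,
      mem_restart_lang_iff ⟨by norm_num, by norm_num⟩ hμ n]
    simp only [mapTW, List.mem_map]
    rintro _ ⟨p, hp, rfl⟩
    exact hgood _ (List.mem_toFinset.2 (List.mem_map_of_mem hp))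
  · exact iff_of_false (fun h => hm (lang_subset_TW h)) (fun h => hm (hM h))

section composition

variable {A G : Type*} {L : Set (List (A × ℝ))} {M : Set (List (G × ℝ))}

lemma mapTW_notMem_and_mapTW_mem_iff {Loc X : Type*} {B : TimedAutomaton (A ⊕ Unit ⊕ G) Loc X}
    (hB : B.Lang = compLang L (TW G) ∪ compLang (TW A) M) (hM : M ⊆ TW G) (hMTW : M ≠ TW G)
    {u : List (A × ℝ)} (hu : u ∈ TW A) (huL : u ∉ L) {n : ℤ} (hn : 0 ≤ n)
    (hun : ∀ p ∈ u, p.2 ≤ n) {π : ℝ → ℝ} (hπ : IsSTimedAutomorphism {0} π) :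
    mapTW π u ∉ L ∧ ∀ m, mapTW π m ∈ M ↔ m ∈ M := by
  have hn' : (0 : ℝ) ≤ n := by exact_mod_cast hn
  have hres : ∀ m, compWord (mapTW π u) n (mapTW π m) ∈ B.Lang ↔ m ∈ M := fun m => by
    rw [← mapTW_compWord hπ, TimedAutomaton.mapTW_mem_lang_iff hπ, hB,
      compWord_mem_compLang_union_iff_of_notMem hM huL hn' hun hu]
  have hπuL : mapTW π u ∉ L := fun hπuL => hMTW <| hM.antisymm fun m hm => by
    rw [← hres, hB, compWord_mem_compLang_union_iff_of_mem hM hπuL hn' (hπ.mapTW_le hun)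
      (hπ.mapTW_mem_TW hu)]
    exact hπ.mapTW_mem_TW hm
  refine ⟨hπuL, fun m => ?_⟩
  rw [← compWord_mem_compLang_union_iff_of_notMem hM hπuL hn' (hπ.mapTW_le hun)
    (hπ.mapTW_mem_TW hu), ← hB, hres]

theorem eq_TW_of_recognisableByDTA {k : ℕ} {A G : Type} {L : Set (List (A × ℝ))}
    {M : Set (List (G × ℝ))} (hL : L ⊆ TW A) (hM : M ⊆ TW G) (hMk : ¬ RecognisableByDTA k M)
    (hN : RecognisableByDTA k (compLang L (TW G) ∪ compLang (TW A) M)) : L = TW A := by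
  obtain ⟨Loc, _, B, hdet, hB⟩ := hN
  by_contra hLTW
  obtain ⟨u, hu, huL⟩ : ∃ u ∈ TW A, u ∉ L := Set.not_subset.1 fun h => hLTW (hL.antisymm h)
  have hMTW : M ≠ TW G := fun h => hMk (h ▸ recognisableByDTA_TW k G)
  obtain ⟨n, hn, hun⟩ : ∃ n : ℤ, 0 ≤ n ∧ ∀ p ∈ u, p.2 ≤ n := by
    obtain ⟨b, hb⟩ := (u.map Prod.snd).toFinset.bddAbove
    refine ⟨⌈b⌉₊, by positivity, fun p hp => ?_⟩
    push_cast
    exact (hb (List.mem_toFinset.2 (List.mem_map_of_mem hp))).trans (Nat.le_ceil b)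
  have hinv := fun π (hπ : IsSTimedAutomorphism {0} π) =>
    mapTW_notMem_and_mapTW_mem_iff hB hM hMTW hu huL hn hun hπ
  obtain ⟨π, hπ, hsmall⟩ :=
    exists_isSTimedAutomorphism_fract_lt (u.map Prod.snd).toFinset (ε := 1 / 4)
      ⟨by norm_num, by norm_num⟩
  refine hMk (recognisableByDTA_of_residual hdet hM (fun σ hσ => (hinv σ hσ).2)
    (Sum.inr ∘ Sum.inr) (w₀ := (mapTW π u).map fun p => (Sum.inl p.1, p.2)) ?_
    (Sum.inr (Sum.inl ())) n fun m => ?_)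
  · simp only [mapTW, List.map_map, List.mem_map]
    rintro _ ⟨p, hp, rfl⟩
    exact hsmall _ (List.mem_toFinset.2 (List.mem_map_of_mem hp))
  · rw [← compWord_mem_compLang_union_iff_of_notMem hM (hinv π hπ).1 (by exact_mod_cast hn)
      (hπ.mapTW_le hun) (hπ.mapTW_mem_TW hu), ← hB, compWord_eq_append]
    simp [compWord]

end composition

theorem universality_iff_composition_deterministic_general (k : ℕ)
    (Y : (A : Type) → Set (Set (List (A × ℝ))))
    (hYtw : ∀ (A : Type) (L : Set (List (A × ℝ))), L ∈ Y A → L ⊆ TW A)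
    (Sg Gm : Type)
    (L : Set (List (Sg × ℝ))) (M : Set (List (Gm × ℝ)))
    (hL : L ∈ Y Sg) (hM : M ∈ Y Gm)
    (hMnotk : ¬ RecognisableByDTA k M) :
    L = TW Sg ↔
      RecognisableByDTA k (compLang L (TW Gm) ∪ compLang (TW Sg) M) := by
  refine ⟨fun hLTW => ?_, eq_TW_of_recognisableByDTA (hYtw Sg L hL) (hYtw Gm M hM) hMnotk⟩
  subst hLTW
  have hsub : compLang (TW Sg) M ⊆ compLang (TW Sg) (TW Gm) :=
    fun _ ⟨v, hv, t, m, hm, h⟩ => ⟨v, hv, t, m, hYtw Gm M hM hm, h⟩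
  rw [Set.union_eq_self_of_subset_right hsub, compLang_TW_TW]
  exact (compShapeDFA Sg Gm).recognisableByDTA k

/-- Let `Y` be a class of timed languages containing all timeless languages, closed
under union and composition, and containing some language `M` not recognised by any
`k`-clock DTA. Then for `L ∈ Y` over `Σ`, with `N := (L ▷ {$} ▷ TW Γ) ∪ (TW Σ ▷ {$} ▷ M)`:
`L = TW Σ` iff `N` is recognised by a deterministic timed automaton with `k` clocks. -/
theorem universality_iff_composition_deterministic (k : ℕ)
    (Y : (A : Type) → Set (Set (List (A × ℝ))))
    (hYtw : ∀ (A : Type) (L : Set (List (A × ℝ))), L ∈ Y A → L ⊆ TW A)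
    (h1 : ∀ (A : Type) (L : Set (List (A × ℝ))), Timeless L → L ∈ Y A)
    (h2union : ∀ (A : Type) (L L' : Set (List (A × ℝ))),
      L ∈ Y A → L' ∈ Y A → L ∪ L' ∈ Y A)
    (h2comp : ∀ (A B : Type) (L : Set (List (A × ℝ))) (M : Set (List (B × ℝ))),
      L ∈ Y A → M ∈ Y B → compLang L M ∈ Y (A ⊕ Unit ⊕ B))
    (Sg Gm : Type) (instSg : Finite Sg) (instGm : Finite Gm)
    (L : Set (List (Sg × ℝ))) (M : Set (List (Gm × ℝ)))
    (hL : L ∈ Y Sg) (hM : M ∈ Y Gm)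
    (hMnotk : ¬ RecognisableByDTA k M) :
    L = TW Sg ↔
      RecognisableByDTA k (compLang L (TW Gm) ∪ compLang (TW Sg) M) :=
  universality_iff_composition_deterministic_general k Y hYtw Sg Gm L M hL hM hMnotk
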